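/- arXiv:2605.04100 — 6 statements merged into one kernel-verified Lean document; each statement's English description precedes it below -/
import Mathlib

section
/- (Column sums of the RETD residual matrix.) Let n ≥ 1, let P be an n×n row-stochastic real matrix, let γ ∈ [0,1), let d ∈ ℝⁿ be a probability vector, let f = (I − γPᵀ)⁻¹ d, let F = diag(f), let c > 0, and set K = F(I − γP) − (1/(1+c)) d dᵀ. Then 1ᵀ K = (c/(1+c)) dᵀ; in particular, if every entry of d is strictly positive, then every column sum of K is strictly positive. -/
open Matrix BigOperators

/-- Column sums of the RETD residual matrix: with
`K = F(I − γP) − (1/(1+c)) d dᵀ`, we have `1ᵀ K = (c/(1+c)) dᵀ`;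
in particular, if every entry of `d` is strictly positive, then every
column sum of `K` is strictly positive. -/
theorem stmt_5 (n : ℕ) (hn : 1 ≤ n) (P : Matrix (Fin n) (Fin n) ℝ)
    (hP0 : ∀ i j, 0 ≤ P i j) (hP1 : ∀ i, ∑ j, P i j = 1)
    (γ : ℝ) (hγ0 : 0 ≤ γ) (hγ1 : γ < 1)
    (d : Fin n → ℝ) (hd0 : ∀ i, 0 ≤ d i) (hd1 : ∑ i, d i = 1)
    (f : Fin n → ℝ) (hf : f = (1 - γ • Pᵀ)⁻¹ *ᵥ d)
    (c : ℝ) (hc : 0 < c)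
    (K : Matrix (Fin n) (Fin n) ℝ)
    (hK : K = Matrix.diagonal f * (1 - γ • P) - (1 / (1 + c)) • vecMulVec d d) :
    (fun _ : Fin n => (1 : ℝ)) ᵥ* K = (c / (1 + c)) • d ∧
    ((∀ i, 0 < d i) → ∀ j, 0 < ∑ i, K i j) := by
  set A : Matrix (Fin n) (Fin n) ℝ := 1 - γ • Pᵀ with hA
  have hPle : ∀ i j, P i j ≤ 1 := by
    intro i j
    calc P i j ≤ ∑ k, P i k := Finset.single_le_sum (fun k _ => hP0 i k) (Finset.mem_univ j)
    _ = 1 := hP1 i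
  have hdet : A.det ≠ 0 := by
    apply det_ne_zero_of_sum_col_lt_diag
    intro k
    have h1 : ∀ i ∈ Finset.univ.erase k, ‖A i k‖ = γ * P k i := by
      intro i hi
      have hik : i ≠ k := Finset.ne_of_mem_erase hi
      simp [hA, Matrix.one_apply, hik, abs_of_nonneg hγ0, abs_of_nonneg (hP0 k i)]
    rw [Finset.sum_congr rfl h1]
    have hle : γ * P k k ≤ γ := by
      nlinarith [hPle k k, hP0 k k]
    have hAkk : ‖A k k‖ = 1 - γ * P k k := by
      have : γ * P k k < 1 := lt_of_le_of_lt hle hγ1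
      simp only [hA, Matrix.sub_apply, Matrix.one_apply_eq, Matrix.smul_apply,
        Matrix.transpose_apply, smul_eq_mul, Real.norm_eq_abs]
      rw [abs_of_nonneg (by linarith)]
    rw [hAkk]
    have hsum : ∑ i ∈ Finset.univ.erase k, γ * P k i = γ * (1 - P k k) := by
      rw [← Finset.mul_sum]
      congr 1
      have := hP1 k
      rw [← Finset.add_sum_erase _ _ (Finset.mem_univ k)] at this
      linarith
    rw [hsum]
    nlinarith [hP0 k k, hPle k k]
  have hunit : IsUnit A.det := isUnit_iff_ne_zero.mpr hdet
  have hAf : A *ᵥ f = d := by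
    rw [hf, Matrix.mulVec_mulVec, Matrix.mul_nonsing_inv A hunit, Matrix.one_mulVec]
  -- key: column sums of F(I-γP) equal d
  have hcol : ∀ j, ∑ i, (Matrix.diagonal f * (1 - γ • P)) i j = d j := by
    intro j
    have : ∀ i, (Matrix.diagonal f * (1 - γ • P)) i j = f i * ((1 : Matrix (Fin n) (Fin n) ℝ) i j - γ * P i j) := by
      intro i
      simp [Matrix.diagonal_mul, Matrix.sub_apply, Matrix.smul_apply, smul_eq_mul]
    rw [Finset.sum_congr rfl fun i _ => this i]
    have hd := congrFun hAf j
    simp only [hA, Matrix.mulVec, dotProduct, Matrix.sub_apply, Matrix.smul_apply,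
      Matrix.transpose_apply, smul_eq_mul, sub_mul] at hd
    rw [← hd]
    apply Finset.sum_congr rfl
    intro i _
    by_cases h : i = j
    · subst h; simp [Matrix.one_apply]; ring
    · simp [Matrix.one_apply, h, Ne.symm h]; ring
  have hc1 : (0:ℝ) < 1 + c := by linarith
  have hmain : (fun _ : Fin n => (1 : ℝ)) ᵥ* K = (c / (1 + c)) • d := by
    funext j
    have hsum : ((fun _ : Fin n => (1 : ℝ)) ᵥ* K) j = ∑ i, K i j := by
      simp [Matrix.vecMul, dotProduct]
    rw [hsum, hK]
    simp only [Matrix.sub_apply, Matrix.smul_apply, Matrix.vecMulVec_apply, smul_eq_mul]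
    rw [Finset.sum_sub_distrib, hcol j]
    have hs : ∑ x, 1 / (1 + c) * (d x * d j) = 1 / (1 + c) * d j := by
      rw [← Finset.mul_sum, ← Finset.sum_mul, hd1, one_mul]
    rw [hs]
    simp only [Pi.smul_apply, smul_eq_mul]
    field_simp
    ring
  refine ⟨hmain, fun hdpos j => ?_⟩
  have : ∑ i, K i j = (c / (1 + c)) * d j := by
    have := congrFun hmain j
    simpa [Matrix.vecMul, dotProduct] using this
  rw [this]
  exact mul_pos (div_pos hc hc1) (hdpos j)
end

section
/- (Quadratic-form positivity for matrices with nonpositive off-diagonals and positive row and column sums.) Let n ≥ 1 and let A be an n×n real matrix such that A_{ij} ≤ 0 for all i ≠ j, every row sum Σ_j A_{ij} is strictly positive, and every column sum Σ_i A_{ij} is strictly positive. Then for every nonzero x ∈ ℝⁿ, xᵀ A x > 0. -/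
open Matrix BigOperators

/-- Quadratic-form positivity for matrices with nonpositive
off-diagonals and positive row and column sums: if `A_{ij} ≤ 0` for `i ≠ j`,
every row sum of `A` is strictly positive and every column sum of `A` is
strictly positive, then `xᵀ A x > 0` for every nonzero `x`. -/
theorem stmt_8 (n : ℕ) (hn : 1 ≤ n) (A : Matrix (Fin n) (Fin n) ℝ)
    (hoff : ∀ i j, i ≠ j → A i j ≤ 0)
    (hrow : ∀ i, 0 < ∑ j, A i j)
    (hcol : ∀ j, 0 < ∑ i, A i j) :
    ∀ x : Fin n → ℝ, x ≠ 0 → 0 < x ⬝ᵥ (A *ᵥ x) := by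
  intro x hx
  obtain ⟨i0, hi0⟩ := Function.ne_iff.mp hx
  have key : ∀ i j, A i j * (x i ^ 2) / 2 + A i j * (x j ^ 2) / 2 ≤ x i * (A i j * x j) := by
    intro i j
    rcases eq_or_ne i j with rfl | h
    · nlinarith [sq_nonneg (x i)]
    · have h1 := hoff i j h
      nlinarith [sq_nonneg (x i - x j), sq_nonneg (x i + x j)]
  have hdot : x ⬝ᵥ (A *ᵥ x) = ∑ i, ∑ j, x i * (A i j * x j) := by
    simp [dotProduct, mulVec, Finset.mul_sum]
  rw [hdot]
  have hS : ∑ i, ∑ j, (A i j * (x i ^ 2) / 2 + A i j * (x j ^ 2) / 2)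
      ≤ ∑ i, ∑ j, x i * (A i j * x j) :=
    Finset.sum_le_sum fun i _ => Finset.sum_le_sum fun j _ => key i j
  refine lt_of_lt_of_le ?_ hS
  have hS2 : ∑ i, ∑ j, (A i j * (x i ^ 2) / 2 + A i j * (x j ^ 2) / 2)
      = ∑ i, (x i ^ 2 * (∑ j, A i j) / 2) + ∑ j, (x j ^ 2 * (∑ i, A i j) / 2) := by
    simp_rw [Finset.sum_add_distrib]
    congr 1
    · refine Finset.sum_congr rfl fun i _ => ?_
      rw [Finset.mul_sum, Finset.sum_div]
      exact Finset.sum_congr rfl fun j _ => by ring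
    · rw [Finset.sum_comm]
      refine Finset.sum_congr rfl fun j _ => ?_
      rw [Finset.mul_sum, Finset.sum_div]
      exact Finset.sum_congr rfl fun i _ => by ring
  rw [hS2]
  have h1 : 0 ≤ ∑ i, (x i ^ 2 * (∑ j, A i j) / 2) :=
    Finset.sum_nonneg fun i _ =>
      div_nonneg (mul_nonneg (sq_nonneg _) (hrow i).le) (by norm_num)
  have h2 : 0 < ∑ j, (x j ^ 2 * (∑ i, A i j) / 2) := by
    refine Finset.sum_pos'
      (fun j _ => div_nonneg (mul_nonneg (sq_nonneg _) (hcol j).le) (by norm_num))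
      ⟨i0, Finset.mem_univ _, ?_⟩
    have hx2 : 0 < x i0 ^ 2 := lt_of_le_of_ne (sq_nonneg _) (Ne.symm (pow_ne_zero 2 hi0))
    exact div_pos (mul_pos hx2 (hcol i0)) two_pos
  linarith
end

section
/- (Positive definiteness of the projected residual matrix.) Let n ≥ 1, let P be an n×n row-stochastic real matrix, let γ ∈ [0,1), let d ∈ ℝⁿ be a probability vector with strictly positive entries, let f = (I − γPᵀ)⁻¹ d, let F = diag(f), let c ≥ γ/(1−γ) with c > 0, and set K = F(I − γP) − (1/(1+c)) d dᵀ. Let Φ be an n×k real matrix of full column rank (k ≤ n). Then the k×k matrix Φᵀ K Φ satisfies θᵀ(Φᵀ K Φ)θ > 0 for every nonzero θ ∈ ℝᵏ. -/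
open Matrix BigOperators

set_option maxHeartbeats 2000000 in
/-- Positive definiteness of the projected residual matrix:
under the RETD hypotheses with `d` a strictly positive probability vector,
`c ≥ γ/(1−γ)`, `c > 0`, and `Φ` of full column rank, the `k×k` matrix
`Φᵀ K Φ` satisfies `θᵀ(Φᵀ K Φ)θ > 0` for every nonzero `θ`. -/
theorem stmt_10 (n k : ℕ) (hn : 1 ≤ n) (hk : k ≤ n)
    (P : Matrix (Fin n) (Fin n) ℝ)
    (hP0 : ∀ i j, 0 ≤ P i j) (hP1 : ∀ i, ∑ j, P i j = 1)
    (γ : ℝ) (hγ0 : 0 ≤ γ) (hγ1 : γ < 1)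
    (d : Fin n → ℝ) (hd0 : ∀ i, 0 < d i) (hd1 : ∑ i, d i = 1)
    (f : Fin n → ℝ) (hf : f = (1 - γ • Pᵀ)⁻¹ *ᵥ d)
    (c : ℝ) (hc0 : 0 < c) (hc : γ / (1 - γ) ≤ c)
    (K : Matrix (Fin n) (Fin n) ℝ)
    (hK : K = Matrix.diagonal f * (1 - γ • P) - (1 / (1 + c)) • vecMulVec d d)
    (Φ : Matrix (Fin n) (Fin k) ℝ)
    (hΦ : ∀ θ : Fin k → ℝ, Φ *ᵥ θ = 0 → θ = 0) :
    ∀ θ : Fin k → ℝ, θ ≠ 0 → 0 < θ ⬝ᵥ ((Φᵀ * K * Φ) *ᵥ θ) := by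
  intro θ hθ
  have hγ' : (0:ℝ) < 1 - γ := by linarith
  set t : ℝ := 1 / (1 + c) with ht
  have ht0 : 0 < t := by positivity
  have htγ : t ≤ 1 - γ := by
    rw [ht, div_le_iff₀ (by positivity)]
    rw [div_le_iff₀ hγ'] at hc
    nlinarith
  have ht1 : t < 1 := by
    rw [ht, div_lt_one (by positivity)]; linarith
  -- invertibility of 1 - γ • Pᵀ
  have hdetP : (1 - γ • P).det ≠ 0 := by
    intro hdet
    obtain ⟨v, hv0, hv⟩ := (Matrix.exists_mulVec_eq_zero_iff).2 hdet
    obtain ⟨i, -, hi⟩ := Finset.exists_max_image Finset.univ (fun j => |v j|)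
      (Finset.univ_nonempty_iff.2 ⟨⟨0, hn⟩⟩)
    have hvi : ∀ j, |v j| ≤ |v i| := fun j => hi j (Finset.mem_univ j)
    have hline : v i = γ * ∑ j, P i j * v j := by
      have h := congrFun hv i
      rw [Matrix.sub_mulVec, Matrix.one_mulVec, Matrix.smul_mulVec] at h
      have h' : v i - γ * ∑ j, P i j * v j = 0 := by
        simpa [Matrix.mulVec, dotProduct] using h
      linarith
    have habs : |v i| ≤ γ * |v i| := by
      calc |v i| = γ * |∑ j, P i j * v j| := by
            rw [hline, abs_mul, abs_of_nonneg hγ0]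
        _ ≤ γ * ∑ j, |P i j * v j| :=
            mul_le_mul_of_nonneg_left (Finset.abs_sum_le_sum_abs _ _) hγ0
        _ ≤ γ * ∑ j, P i j * |v i| := by
            refine mul_le_mul_of_nonneg_left (Finset.sum_le_sum fun j _ => ?_) hγ0
            rw [abs_mul, abs_of_nonneg (hP0 i j)]
            exact mul_le_mul_of_nonneg_left (hvi j) (hP0 i j)
        _ = γ * |v i| := by rw [← Finset.sum_mul, hP1 i, one_mul]
    have hvi0 : |v i| = 0 := by nlinarith [abs_nonneg (v i)]
    exact hv0 (funext fun j => abs_eq_zero.1 (le_antisymm (hvi0 ▸ hvi j) (abs_nonneg _)))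
  have hdetA : (1 - γ • Pᵀ).det ≠ 0 := by
    have : (1 - γ • Pᵀ) = (1 - γ • P)ᵀ := by
      rw [Matrix.transpose_sub, Matrix.transpose_one, Matrix.transpose_smul]
    rw [this, Matrix.det_transpose]
    exact hdetP
  have hAf : (1 - γ • Pᵀ) *ᵥ f = d := by
    rw [hf, Matrix.mulVec_mulVec, Matrix.mul_nonsing_inv _ (isUnit_iff_ne_zero.2 hdetA),
      Matrix.one_mulVec]
  have heq : ∀ i, f i = d i + γ * ∑ j, P j i * f j := by
    intro i
    have h := congrFun hAf i
    rw [Matrix.sub_mulVec, Matrix.one_mulVec, Matrix.smul_mulVec] at h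
    have h' : f i - γ * ∑ j, P j i * f j = d i := by
      simpa [Matrix.mulVec, dotProduct, Matrix.transpose_apply] using h
    linarith
  -- nonnegativity of f
  have hfnn : ∀ i, 0 ≤ f i := by
    by_contra h
    push_neg at h
    obtain ⟨i0, hi0⟩ := h
    classical
    set S := Finset.univ.filter (fun i => f i < 0) with hS
    have hi0S : i0 ∈ S := by simp [hS, hi0]
    have hTle : ∑ i ∈ S, f i ≤ 0 :=
      Finset.sum_nonpos fun i hiS => le_of_lt (Finset.mem_filter.1 hiS).2
    have hD : 0 < ∑ i ∈ S, d i :=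
      Finset.sum_pos (fun i _ => hd0 i) ⟨i0, hi0S⟩
    have hTeq : ∑ i ∈ S, f i = ∑ i ∈ S, d i + γ * ∑ i ∈ S, ∑ j, P j i * f j := by
      rw [Finset.mul_sum, ← Finset.sum_add_distrib]
      exact Finset.sum_congr rfl fun i _ => heq i
    have hswap : ∑ i ∈ S, ∑ j, P j i * f j = ∑ j, f j * ∑ i ∈ S, P j i := by
      rw [Finset.sum_comm]
      refine Finset.sum_congr rfl fun j _ => ?_
      rw [← Finset.sum_mul, mul_comm]
    have hbound : ∑ i ∈ S, f i ≤ ∑ j, f j * ∑ i ∈ S, P j i := by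
      have : ∑ i ∈ S, f i = ∑ j, if f j < 0 then f j else 0 := by
        rw [hS, Finset.sum_filter]
      rw [this]
      refine Finset.sum_le_sum fun j _ => ?_
      have hc0' : 0 ≤ ∑ i ∈ S, P j i := Finset.sum_nonneg fun i _ => hP0 j i
      have hc1' : ∑ i ∈ S, P j i ≤ 1 := by
        rw [← hP1 j]
        exact Finset.sum_le_sum_of_subset_of_nonneg (Finset.subset_univ _)
          (fun i _ _ => hP0 j i)
      by_cases hj : f j < 0
      · simp only [if_pos hj]
        nlinarith
      · simp only [if_neg hj]
        push_neg at hj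
        exact mul_nonneg hj hc0'
    have : (0:ℝ) < (1 - γ) * ∑ i ∈ S, f i := by
      nlinarith [mul_le_mul_of_nonneg_left (hswap ▸ hbound) hγ0]
    nlinarith
  have hfd : ∀ i, d i ≤ f i := by
    intro i
    have hnn : 0 ≤ γ * ∑ j, P j i * f j :=
      mul_nonneg hγ0 (Finset.sum_nonneg fun j _ => mul_nonneg (hP0 j i) (hfnn j))
    linarith [heq i]
  -- main computation
  set y : Fin n → ℝ := Φ *ᵥ θ with hy
  have hy0 : y ≠ 0 := fun h => hθ (hΦ θ h)
  have hrw : θ ⬝ᵥ ((Φᵀ * K * Φ) *ᵥ θ) = y ⬝ᵥ (K *ᵥ y) := by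
    rw [← Matrix.mulVec_mulVec, ← Matrix.mulVec_mulVec, Matrix.dotProduct_mulVec,
      Matrix.vecMul_transpose]
  set E1 : ℝ := ∑ i, f i * y i ^ 2 with hE1
  set E2 : ℝ := ∑ i, ∑ j, f i * P i j * y i * y j with hE2
  set Sd : ℝ := ∑ i, d i * y i ^ 2 with hSd
  set Dy : ℝ := ∑ i, d i * y i with hDy
  have hKe : ∀ i j, K i j = (if i = j then f i else 0) - γ * (f i * P i j)
      - t * (d i * d j) := by
    intro i j
    rw [hK]
    simp only [Matrix.sub_apply, Matrix.smul_apply, Matrix.vecMulVec_apply,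
      Matrix.diagonal_mul, Matrix.of_apply, Matrix.sub_apply, Matrix.one_apply,
      Matrix.smul_apply, smul_eq_mul]
    split_ifs <;> ring
  have hexp : y ⬝ᵥ (K *ᵥ y) = E1 - γ * E2 - t * Dy ^ 2 := by
    have h0 : y ⬝ᵥ (K *ᵥ y) = ∑ i, ∑ j, y i * (K i j * y j) := by
      simp [dotProduct, Matrix.mulVec, Finset.mul_sum]
    rw [h0]
    have hsplit : ∀ i, ∑ j, y i * (K i j * y j)
        = f i * y i ^ 2 - γ * (∑ j, f i * P i j * y i * y j)
          - t * (d i * y i * Dy) := by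
      intro i
      have hterm : ∀ j, y i * (K i j * y j)
          = (if i = j then f i * y i * y j else 0)
            - (γ * (f i * P i j * y i * y j) + t * (d i * y i * (d j * y j))) := by
        intro j; rw [hKe i j]; split_ifs <;> ring
      calc ∑ j, y i * (K i j * y j)
          = ∑ j, ((if i = j then f i * y i * y j else 0)
            - (γ * (f i * P i j * y i * y j) + t * (d i * y i * (d j * y j)))) :=
            Finset.sum_congr rfl fun j _ => hterm j
        _ = (∑ j, if i = j then f i * y i * y j else 0)
            - ((∑ j, γ * (f i * P i j * y i * y j))
              + ∑ j, t * (d i * y i * (d j * y j))) := by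
            rw [Finset.sum_sub_distrib, Finset.sum_add_distrib]
        _ = f i * y i ^ 2 - (γ * (∑ j, f i * P i j * y i * y j)
              + t * (d i * y i * Dy)) := by
            rw [Finset.sum_ite_eq, ← Finset.mul_sum, ← Finset.mul_sum, ← Finset.mul_sum]
            simp [hDy, Finset.mul_sum]
            ring
        _ = _ := by ring
    calc ∑ i, ∑ j, y i * (K i j * y j)
        = ∑ i, (f i * y i ^ 2 - γ * (∑ j, f i * P i j * y i * y j)
            - t * (d i * y i * Dy)) := Finset.sum_congr rfl fun i _ => hsplit i
      _ = E1 - γ * E2 - t * Dy ^ 2 := by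
          rw [Finset.sum_sub_distrib, Finset.sum_sub_distrib, ← Finset.mul_sum,
            ← Finset.mul_sum]
          have : ∑ i, d i * y i * Dy = Dy ^ 2 := by
            rw [← Finset.sum_mul, ← hDy, sq]
          rw [← hE1, ← hE2, this]
  rw [hrw, hexp]
  -- basic positivity facts
  have hS0 : 0 < Sd := by
    obtain ⟨i, hi⟩ : ∃ i, y i ≠ 0 := by
      by_contra hcon; push_neg at hcon; exact hy0 (funext fun i => hcon i)
    refine Finset.sum_pos' (fun i _ => mul_nonneg (hd0 i).le (sq_nonneg _))
      ⟨i, Finset.mem_univ i, ?_⟩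
    exact mul_pos (hd0 i) ((sq_nonneg _).lt_of_ne' (pow_ne_zero 2 hi))
  have hSE : Sd ≤ E1 :=
    Finset.sum_le_sum fun i _ => mul_le_mul_of_nonneg_right (hfd i) (sq_nonneg _)
  have hCS : Dy ^ 2 ≤ Sd := by
    have h := Finset.sum_mul_sq_le_sq_mul_sq Finset.univ
      (fun i => Real.sqrt (d i)) (fun i => Real.sqrt (d i) * y i)
    have e1 : ∀ i : Fin n, Real.sqrt (d i) * (Real.sqrt (d i) * y i) = d i * y i :=
      fun i => by rw [← mul_assoc, Real.mul_self_sqrt (hd0 i).le]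
    have e2 : ∀ i : Fin n, Real.sqrt (d i) ^ 2 = d i :=
      fun i => Real.sq_sqrt (hd0 i).le
    have e3 : ∀ i : Fin n, (Real.sqrt (d i) * y i) ^ 2 = d i * y i ^ 2 :=
      fun i => by rw [mul_pow, Real.sq_sqrt (hd0 i).le]
    simp only [e1, e2, e3] at h
    calc Dy ^ 2 ≤ (∑ i, d i) * ∑ i, d i * y i ^ 2 := h
      _ = Sd := by rw [hd1, one_mul, hSd]
  -- Young's inequality for the cross term
  set C : ℝ := ∑ j, (∑ i, f i * P i j) * y j ^ 2 with hC
  have hYoung : 2 * E2 ≤ E1 + C := by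
    have step : ∀ i j, 2 * (f i * P i j * y i * y j)
        ≤ f i * P i j * y i ^ 2 + f i * P i j * y j ^ 2 := by
      intro i j
      nlinarith [mul_nonneg (hfnn i) (hP0 i j), sq_nonneg (y i - y j)]
    calc 2 * E2 = ∑ i, ∑ j, 2 * (f i * P i j * y i * y j) := by
          rw [hE2, Finset.mul_sum]
          exact Finset.sum_congr rfl fun i _ => Finset.mul_sum _ _ _
      _ ≤ ∑ i, ∑ j, (f i * P i j * y i ^ 2 + f i * P i j * y j ^ 2) :=
          Finset.sum_le_sum fun i _ => Finset.sum_le_sum fun j _ => step i j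
      _ = (∑ i, ∑ j, f i * P i j * y i ^ 2) + ∑ i, ∑ j, f i * P i j * y j ^ 2 := by
          rw [← Finset.sum_add_distrib]
          exact Finset.sum_congr rfl fun i _ => Finset.sum_add_distrib
      _ = E1 + C := by
          congr 1
          · refine Finset.sum_congr rfl fun i _ => ?_
            calc ∑ j, f i * P i j * y i ^ 2 = (∑ j, P i j) * (f i * y i ^ 2) := by
                  rw [Finset.sum_mul]
                  exact Finset.sum_congr rfl fun j _ => by ring
              _ = f i * y i ^ 2 := by rw [hP1 i, one_mul]
          · rw [Finset.sum_comm, hC]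
            exact Finset.sum_congr rfl fun j _ => by rw [Finset.sum_mul]
  have hγC : γ * C = E1 - Sd := by
    have hterm : ∀ j, γ * ((∑ i, f i * P i j) * y j ^ 2) = (f j - d j) * y j ^ 2 := by
      intro j
      have h1 : γ * ∑ i, P i j * f i = f j - d j := by linarith [heq j]
      have h2 : (∑ i, f i * P i j) = ∑ i, P i j * f i :=
        Finset.sum_congr rfl fun i _ => mul_comm _ _
      rw [h2, ← mul_assoc, h1]
    calc γ * C = ∑ j, γ * ((∑ i, f i * P i j) * y j ^ 2) := by rw [hC, Finset.mul_sum]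
      _ = ∑ j, (f j - d j) * y j ^ 2 := Finset.sum_congr rfl fun j _ => hterm j
      _ = E1 - Sd := by
          rw [hE1, hSd, ← Finset.sum_sub_distrib]
          exact Finset.sum_congr rfl fun j _ => by ring
  have h2γ : 2 * (γ * E2) ≤ γ * E1 + (E1 - Sd) := by
    have h := mul_le_mul_of_nonneg_left hYoung hγ0
    rw [mul_add, hγC] at h
    linarith
  have hprod1 : 0 ≤ (1 - γ) * (E1 - Sd) := mul_nonneg hγ'.le (by linarith)
  have hprod2 : t * Dy ^ 2 ≤ t * Sd := mul_le_mul_of_nonneg_left hCS ht0.le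
  have hprod3 : 0 < (1 - γ / 2 - t) * Sd := mul_pos (by linarith) hS0
  nlinarith [h2γ, hprod1, hprod2, hprod3]
end

section
/- (Positive definiteness of the RETD key matrix, main stability result.) Let n, k ≥ 1, let P be an n×n row-stochastic real matrix, let γ ∈ [0,1), let d ∈ ℝⁿ be a probability vector with strictly positive entries, let f = (I − γPᵀ)⁻¹ d, let F = diag(f), let Φ be an n×k real matrix of full column rank, and let c ≥ γ/(1−γ) with c > 0. Then the (k+1)×(k+1) RETD key matrix Ḡ = [[ΦᵀF(I − γP)Φ, Φᵀd], [dᵀΦ, 1+c]] is positive definite: zᵀ Ḡ z > 0 for every nonzero z ∈ ℝ^{k+1}. -/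
open Matrix BigOperators

set_option maxHeartbeats 1600000 in
/-- Positive definiteness of the RETD key matrix, main stability
result: under the RETD hypotheses with `d` a strictly positive probability
vector, `Φ` of full column rank, and `c ≥ γ/(1−γ)`, `c > 0`, the
`(k+1)×(k+1)` RETD key matrix
`Ḡ = [[ΦᵀF(I − γP)Φ, Φᵀd], [dᵀΦ, 1+c]]` is positive definite. -/
theorem stmt_13 (n k : ℕ) (hn : 1 ≤ n) (hk : 1 ≤ k)
    (P : Matrix (Fin n) (Fin n) ℝ)
    (hP0 : ∀ i j, 0 ≤ P i j) (hP1 : ∀ i, ∑ j, P i j = 1)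
    (γ : ℝ) (hγ0 : 0 ≤ γ) (hγ1 : γ < 1)
    (d : Fin n → ℝ) (hd0 : ∀ i, 0 < d i) (hd1 : ∑ i, d i = 1)
    (f : Fin n → ℝ) (hf : f = (1 - γ • Pᵀ)⁻¹ *ᵥ d)
    (Φ : Matrix (Fin n) (Fin k) ℝ)
    (hΦ : ∀ θ : Fin k → ℝ, Φ *ᵥ θ = 0 → θ = 0)
    (c : ℝ) (hc0 : 0 < c) (hc : γ / (1 - γ) ≤ c)
    (G : Matrix (Fin k ⊕ Fin 1) (Fin k ⊕ Fin 1) ℝ)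
    (hG : G = Matrix.fromBlocks
      (Φᵀ * Matrix.diagonal f * (1 - γ • P) * Φ)
      (Matrix.of fun i (_ : Fin 1) => (d ᵥ* Φ) i)
      (Matrix.of fun (_ : Fin 1) j => (d ᵥ* Φ) j)
      (Matrix.of fun (_ : Fin 1) (_ : Fin 1) => 1 + c)) :
    ∀ z : Fin k ⊕ Fin 1 → ℝ, z ≠ 0 → 0 < z ⬝ᵥ (G *ᵥ z) := by
  have hγ1' : (0:ℝ) < 1 - γ := by linarith
  -- the matrix M = 1 - γ Pᵀ
  set M : Matrix (Fin n) (Fin n) ℝ := 1 - γ • Pᵀ with hM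
  have hMe : ∀ i j, M i j = (if i = j then 1 else 0) - γ * P j i := by
    intro i j
    simp [hM, Matrix.one_apply, Matrix.sub_apply, Matrix.smul_apply, Matrix.transpose_apply]
  -- every entry of P is at most 1
  have hPle1 : ∀ i j, P i j ≤ 1 := by
    intro i j
    calc P i j ≤ ∑ j', P i j' :=
          Finset.single_le_sum (fun j' _ => hP0 i j') (Finset.mem_univ j)
      _ = 1 := hP1 i
  -- M is invertible (strict diagonal dominance by columns)
  have hdet : M.det ≠ 0 := by
    apply det_ne_zero_of_sum_col_lt_diag
    intro k0
    have h1 : ∀ i ∈ Finset.univ.erase k0, ‖M i k0‖ = γ * P k0 i := by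
      intro i hi
      have hik : i ≠ k0 := (Finset.mem_erase.mp hi).1
      rw [hMe, if_neg hik, zero_sub, norm_neg, Real.norm_of_nonneg (mul_nonneg hγ0 (hP0 _ _))]
    rw [Finset.sum_congr rfl h1]
    have h2 : ∑ i ∈ Finset.univ.erase k0, γ * P k0 i = γ * (1 - P k0 k0) := by
      rw [Finset.sum_erase_eq_sub (Finset.mem_univ k0), ← Finset.mul_sum, hP1]
      ring
    rw [h2, hMe, if_pos rfl,
      Real.norm_of_nonneg (by nlinarith [hP0 k0 k0, hPle1 k0 k0] : (0:ℝ) ≤ 1 - γ * P k0 k0)]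
    nlinarith [hP0 k0 k0, hPle1 k0 k0]
  have hunit : IsUnit M.det := isUnit_iff_ne_zero.mpr hdet
  have hMf : M *ᵥ f = d := by
    rw [hf, Matrix.mulVec_mulVec, Matrix.mul_nonsing_inv M hunit, Matrix.one_mulVec]
  -- entrywise equation for f
  have hfe : ∀ i, f i = d i + γ * ∑ j, P j i * f j := by
    intro i
    have h2 : (M *ᵥ f) i = f i - γ * ∑ j, P j i * f j := by
      simp only [Matrix.mulVec, dotProduct, hMe, sub_mul, ite_mul, one_mul, zero_mul,
        Finset.sum_sub_distrib, Finset.sum_ite_eq, Finset.mem_univ, if_true, Finset.mul_sum]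
      ring_nf
    have h3 := congrFun hMf i
    rw [h2] at h3
    have : d i = f i - γ * ∑ j, P j i * f j := h3.symm
    linarith
  -- positivity of f
  have hfpos : ∀ i, 0 < f i := by
    by_contra hcon
    push_neg at hcon
    obtain ⟨i0, hi0⟩ := hcon
    classical
    set S := Finset.univ.filter (fun i => f i ≤ 0) with hS
    have hi0S : i0 ∈ S := by simp [hS, hi0]
    have hσ : ∑ i ∈ S, f i ≤ 0 :=
      Finset.sum_nonpos (fun i hi => (Finset.mem_filter.mp hi).2)
    have key : ∑ i ∈ S, f i = ∑ i ∈ S, d i + γ * ∑ i ∈ S, ∑ j, P j i * f j := by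
      calc ∑ i ∈ S, f i = ∑ i ∈ S, (d i + γ * ∑ j, P j i * f j) :=
            Finset.sum_congr rfl (fun i _ => hfe i)
        _ = ∑ i ∈ S, d i + γ * ∑ i ∈ S, ∑ j, P j i * f j := by
            rw [Finset.sum_add_distrib, Finset.mul_sum]
    have hswap : ∑ i ∈ S, ∑ j, P j i * f j = ∑ j, (∑ i ∈ S, P j i) * f j := by
      rw [Finset.sum_comm]
      exact Finset.sum_congr rfl (fun j _ => by rw [Finset.sum_mul])
    have hbound : ∀ j, (if f j ≤ 0 then f j else 0) ≤ (∑ i ∈ S, P j i) * f j := by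
      intro j
      have hα0 : 0 ≤ ∑ i ∈ S, P j i := Finset.sum_nonneg (fun i _ => hP0 j i)
      have hα1 : ∑ i ∈ S, P j i ≤ 1 := by
        calc ∑ i ∈ S, P j i ≤ ∑ i, P j i :=
              Finset.sum_le_sum_of_subset_of_nonneg (Finset.subset_univ S)
                (fun i _ _ => hP0 j i)
          _ = 1 := hP1 j
      by_cases hj : f j ≤ 0
      · rw [if_pos hj]
        nlinarith
      · rw [if_neg hj]
        push_neg at hj
        exact mul_nonneg hα0 hj.le
    have hT : ∑ i ∈ S, f i ≤ ∑ j, (∑ i ∈ S, P j i) * f j := by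
      calc ∑ i ∈ S, f i = ∑ j, (if f j ≤ 0 then f j else 0) := by
            rw [hS, Finset.sum_filter]
        _ ≤ ∑ j, (∑ i ∈ S, P j i) * f j := Finset.sum_le_sum (fun j _ => hbound j)
    have hdS : 0 < ∑ i ∈ S, d i :=
      Finset.sum_pos (fun i _ => hd0 i) ⟨i0, hi0S⟩
    rw [hswap] at key
    nlinarith [mul_le_mul_of_nonneg_left hT hγ0]
  -- f dominates d
  have hfd : ∀ i, d i ≤ f i := by
    intro i
    have h1 : 0 ≤ ∑ j, P j i * f j :=
      Finset.sum_nonneg (fun j _ => mul_nonneg (hP0 j i) (hfpos j).le)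
    nlinarith [hfe i]
  -- column sums identity
  have hcol : ∀ j, γ * ∑ i, f i * P i j = f j - d j := by
    intro j
    have h1 := hfe j
    have h2 : ∑ i, P i j * f i = ∑ i, f i * P i j :=
      Finset.sum_congr rfl (fun i _ => mul_comm _ _)
    rw [h2] at h1
    linarith
  -- main part
  intro z hz
  set θ : Fin k → ℝ := fun i => z (Sum.inl i) with hθ
  set s : ℝ := z (Sum.inr 0) with hs
  set x : Fin n → ℝ := Φ *ᵥ θ with hx
  have hzs : z = Sum.elim θ (fun _ => s) := by
    funext a
    cases a with
    | inl i => rfl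
    | inr j =>
      have hj : j = 0 := Subsingleton.elim j 0
      rw [hj]; rfl
  set Sf : ℝ := ∑ i, f i * x i ^ 2 with hSf
  set Sd : ℝ := ∑ i, d i * x i ^ 2 with hSd
  set T : ℝ := ∑ i, d i * x i with hT
  set Dbl : ℝ := ∑ i, ∑ j, γ * (f i * (P i j * (x i * x j))) with hDbl
  have hb : (d ᵥ* Φ) ⬝ᵥ θ = T := by
    rw [← Matrix.dotProduct_mulVec, ← hx, hT]
    simp [dotProduct]
  have hA : θ ⬝ᵥ ((Φᵀ * Matrix.diagonal f * (1 - γ • P) * Φ) *ᵥ θ) = Sf - Dbl := by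
    have e1 : (Φᵀ * Matrix.diagonal f * (1 - γ • P) * Φ) *ᵥ θ
        = Φᵀ *ᵥ (Matrix.diagonal f *ᵥ ((1 - γ • P) *ᵥ x)) := by
      rw [hx, Matrix.mulVec_mulVec, Matrix.mulVec_mulVec, Matrix.mulVec_mulVec]
    rw [e1, Matrix.dotProduct_mulVec, Matrix.vecMul_transpose, ← hx]
    have e2 : ∀ i, (Matrix.diagonal f *ᵥ ((1 - γ • P) *ᵥ x)) i
        = f i * (x i - γ * ∑ j, P i j * x j) := by
      intro i
      rw [Matrix.mulVec_diagonal]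
      congr 1
      rw [Matrix.sub_mulVec, Matrix.one_mulVec, Matrix.smul_mulVec]
      simp [Matrix.mulVec, dotProduct]
    calc x ⬝ᵥ (Matrix.diagonal f *ᵥ ((1 - γ • P) *ᵥ x))
        = ∑ i, x i * (f i * (x i - γ * ∑ j, P i j * x j)) := by
          simp only [dotProduct]
          exact Finset.sum_congr rfl (fun i _ => by rw [e2 i])
      _ = Sf - Dbl := by
          rw [hSf, hDbl, ← Finset.sum_sub_distrib]
          refine Finset.sum_congr rfl (fun i _ => ?_)
          have e3 : ∑ j, γ * (f i * (P i j * (x i * x j)))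
              = γ * (f i * (x i * ∑ j, P i j * x j)) := by
            rw [Finset.mul_sum, Finset.mul_sum, Finset.mul_sum]
            exact Finset.sum_congr rfl (fun j _ => by ring)
          rw [e3]
          ring
  have hQ : z ⬝ᵥ (G *ᵥ z) = Sf - Dbl + 2 * s * T + (1 + c) * s ^ 2 := by
    calc z ⬝ᵥ (G *ᵥ z)
        = (Sum.elim θ fun _ => s) ⬝ᵥ (G *ᵥ (Sum.elim θ fun _ => s)) := by rw [← hzs]
      _ = Sf - Dbl + 2 * s * T + (1 + c) * s ^ 2 := by
          rw [hG, Matrix.fromBlocks_mulVec, sumElim_dotProduct_sumElim]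
          simp only [Sum.elim_comp_inl, Sum.elim_comp_inr]
          rw [dotProduct_add, dotProduct_add, hA]
          have hB2 : θ ⬝ᵥ ((Matrix.of fun i (_ : Fin 1) => (d ᵥ* Φ) i) *ᵥ fun _ => s)
              = s * T := by
            have e4 : ∀ i, ((Matrix.of fun i (_ : Fin 1) => (d ᵥ* Φ) i) *ᵥ fun _ => s) i
                = (d ᵥ* Φ) i * s := by
              intro i
              simp [Matrix.mulVec, dotProduct]
            calc θ ⬝ᵥ ((Matrix.of fun i (_ : Fin 1) => (d ᵥ* Φ) i) *ᵥ fun _ => s)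
                = ∑ i, θ i * ((d ᵥ* Φ) i * s) := by
                  simp only [dotProduct]
                  exact Finset.sum_congr rfl (fun i _ => by rw [e4 i])
              _ = s * ((d ᵥ* Φ) ⬝ᵥ θ) := by
                  simp only [dotProduct, Finset.mul_sum]
                  exact Finset.sum_congr rfl (fun i _ => by ring)
              _ = s * T := by rw [hb]
          have hC2 : (fun _ : Fin 1 => s) ⬝ᵥ
                ((Matrix.of fun (_ : Fin 1) j => (d ᵥ* Φ) j) *ᵥ θ
                  + (Matrix.of fun (_ : Fin 1) (_ : Fin 1) => 1 + c) *ᵥ fun _ => s)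
              = s * T + (1 + c) * s ^ 2 := by
            have e5 : ((Matrix.of fun (_ : Fin 1) j => (d ᵥ* Φ) j) *ᵥ θ) 0
                = (d ᵥ* Φ) ⬝ᵥ θ := by
              simp [Matrix.mulVec, dotProduct]
            have e6 : (((Matrix.of fun (_ : Fin 1) (_ : Fin 1) => 1 + c) *ᵥ fun _ => s)) 0
                = (1 + c) * s := by
              simp [Matrix.mulVec, dotProduct]
            calc (fun _ : Fin 1 => s) ⬝ᵥ
                ((Matrix.of fun (_ : Fin 1) j => (d ᵥ* Φ) j) *ᵥ θ
                  + (Matrix.of fun (_ : Fin 1) (_ : Fin 1) => 1 + c) *ᵥ fun _ => s)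
                = s * (((Matrix.of fun (_ : Fin 1) j => (d ᵥ* Φ) j) *ᵥ θ) 0
                    + (((Matrix.of fun (_ : Fin 1) (_ : Fin 1) => 1 + c) *ᵥ fun _ => s)) 0) := by
                  simp [dotProduct, Fin.sum_univ_one]
              _ = s * ((d ᵥ* Φ) ⬝ᵥ θ + (1 + c) * s) := by rw [e5, e6]
              _ = s * T + (1 + c) * s ^ 2 := by rw [hb]; ring
          rw [dotProduct_add] at hC2
          rw [hB2, hC2]
          ring
  by_cases hθ0 : θ = 0
  · -- then x = 0 and s ≠ 0
    have hx0 : x = 0 := by rw [hx, hθ0, Matrix.mulVec_zero]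
    have hs0 : s ≠ 0 := by
      intro h0
      apply hz
      funext a
      cases a with
      | inl i => exact congrFun hθ0 i
      | inr j =>
        have hj : j = 0 := Subsingleton.elim j 0
        rw [hj]; exact h0
    have hSf0 : Sf = 0 := by simp [hSf, hx0]
    have hDbl0 : Dbl = 0 := by simp [hDbl, hx0]
    have hT0 : T = 0 := by simp [hT, hx0]
    rw [hQ, hSf0, hDbl0, hT0]
    have hpos : 0 < (1 + c) * s ^ 2 := by positivity
    linarith
  · -- θ ≠ 0 hence x ≠ 0
    have hx0 : x ≠ 0 := fun h => hθ0 (hΦ θ h)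
    obtain ⟨i1, hi1⟩ : ∃ i, x i ≠ 0 := by
      by_contra hcon
      push_neg at hcon
      exact hx0 (funext hcon)
    have hSdpos : 0 < Sd := by
      apply Finset.sum_pos' (fun i _ => mul_nonneg (hd0 i).le (sq_nonneg _))
      refine ⟨i1, Finset.mem_univ i1, mul_pos (hd0 i1) ?_⟩
      exact lt_of_le_of_ne (sq_nonneg _) (Ne.symm (pow_ne_zero 2 hi1))
    have hSfSd : Sd ≤ Sf :=
      Finset.sum_le_sum (fun i _ => by nlinarith [hfd i, sq_nonneg (x i)])
    -- bound on the double sum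
    have h1 : Dbl ≤ γ / 2 * Sf + 1 / 2 * (Sf - Sd) := by
      have hterm : ∀ i j, γ * (f i * (P i j * (x i * x j)))
          ≤ γ * (f i * (P i j * ((x i ^ 2 + x j ^ 2) / 2))) := by
        intro i j
        have h0 : 0 ≤ γ * (f i * P i j) := mul_nonneg hγ0 (mul_nonneg (hfpos i).le (hP0 i j))
        nlinarith [sq_nonneg (x i - x j)]
      have hstep : Dbl ≤ ∑ i, ∑ j, γ * (f i * (P i j * ((x i ^ 2 + x j ^ 2) / 2))) := by
        rw [hDbl]
        exact Finset.sum_le_sum (fun i _ => Finset.sum_le_sum (fun j _ => hterm i j))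
      have hsplit : ∑ i, ∑ j, γ * (f i * (P i j * ((x i ^ 2 + x j ^ 2) / 2)))
          = γ / 2 * Sf + 1 / 2 * (Sf - Sd) := by
        have he : ∀ i j, γ * (f i * (P i j * ((x i ^ 2 + x j ^ 2) / 2)))
            = γ * (f i * (P i j * (x i ^ 2 / 2))) + γ * (f i * (P i j * (x j ^ 2 / 2))) := by
          intro i j; ring
        simp_rw [he, Finset.sum_add_distrib]
        have hA2 : ∑ i, ∑ j, γ * (f i * (P i j * (x i ^ 2 / 2))) = γ / 2 * Sf := by
          have e7 : ∀ i, ∑ j, γ * (f i * (P i j * (x i ^ 2 / 2)))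
              = γ / 2 * (f i * x i ^ 2) * ∑ j, P i j := by
            intro i
            rw [Finset.mul_sum]
            exact Finset.sum_congr rfl (fun j _ => by ring)
          simp_rw [e7, hP1, hSf, Finset.mul_sum]
          exact Finset.sum_congr rfl (fun i _ => by ring)
        have hB : ∑ i, ∑ j, γ * (f i * (P i j * (x j ^ 2 / 2))) = 1 / 2 * (Sf - Sd) := by
          rw [Finset.sum_comm]
          have e8 : ∀ j, ∑ i, γ * (f i * (P i j * (x j ^ 2 / 2)))
              = x j ^ 2 / 2 * (γ * ∑ i, f i * P i j) := by
            intro j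
            rw [Finset.mul_sum, Finset.mul_sum]
            exact Finset.sum_congr rfl (fun i _ => by ring)
          simp_rw [e8, hcol]
          rw [hSf, hSd, ← Finset.sum_sub_distrib, Finset.mul_sum]
          exact Finset.sum_congr rfl (fun j _ => by ring)
        rw [hA2, hB]
      linarith [hsplit ▸ hstep]
    -- bound on the cross term, with ε = 1/(1+c)
    have h1c : (0:ℝ) < 1 + c := by linarith
    set ε : ℝ := (1 + c)⁻¹ with hε
    have hεpos : 0 < ε := by positivity
    have hεμ : ε * (1 + c) = 1 := inv_mul_cancel₀ h1c.ne'
    have h2 : -(ε * Sd + (1 + c) * s ^ 2) ≤ 2 * s * T := by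
      have hterm : ∀ i, 0 ≤ ε * (d i * x i ^ 2) + 2 * s * (d i * x i)
          + (1 + c) * (d i * s ^ 2) := by
        intro i
        have key : (0:ℝ) ≤ d i * (ε * x i + s) ^ 2 := mul_nonneg (hd0 i).le (sq_nonneg _)
        have hexp : ε * (ε * (d i * x i ^ 2) + 2 * s * (d i * x i) + (1 + c) * (d i * s ^ 2))
            = d i * (ε * x i + s) ^ 2 + (ε * (1 + c) - 1) * (d i * s ^ 2) := by ring
        have h8 : 0 ≤ ε * (ε * (d i * x i ^ 2) + 2 * s * (d i * x i)
            + (1 + c) * (d i * s ^ 2)) := by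
          rw [hexp, hεμ]
          simpa using key
        by_contra hcon
        push_neg at hcon
        exact absurd h8 (not_le.mpr (mul_neg_of_pos_of_neg hεpos hcon))
      have hsum := Finset.sum_nonneg (fun i (_ : i ∈ Finset.univ) => hterm i)
      have hexp2 : ∑ i, (ε * (d i * x i ^ 2) + 2 * s * (d i * x i) + (1 + c) * (d i * s ^ 2))
          = ε * Sd + 2 * s * T + (1 + c) * s ^ 2 := by
        rw [Finset.sum_add_distrib, Finset.sum_add_distrib,
          ← Finset.mul_sum, ← Finset.mul_sum, ← Finset.mul_sum]
        have e9 : ∑ i, d i * s ^ 2 = s ^ 2 := by rw [← Finset.sum_mul, hd1, one_mul]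
        rw [e9, hSd, hT]
      rw [hexp2] at hsum
      linarith
    -- ε < 1 - γ/2
    have hγc : γ ≤ c * (1 - γ) := (div_le_iff₀ hγ1').mp hc
    have hκ : ε < 1 - γ / 2 := by
      have h10 : ε * (1 + c) < (1 - γ / 2) * (1 + c) := by
        rw [hεμ]
        nlinarith [hγc, hc0, hγ0]
      exact lt_of_mul_lt_mul_right h10 h1c.le
    have h5 : (1 - γ) / 2 * Sd ≤ (1 - γ) / 2 * Sf := by nlinarith [hSfSd, hγ1']
    have h6 : 0 < (1 - γ / 2 - ε) * Sd := mul_pos (by linarith) hSdpos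
    rw [hQ]
    nlinarith [h1, h2, h5, h6]
end

section
/- (Positive definiteness of the ETD key matrix.) Let n, k ≥ 1, let P be an n×n row-stochastic real matrix, let γ ∈ [0,1), let d ∈ ℝⁿ be a probability vector with strictly positive entries, let f = (I − γPᵀ)⁻¹ d, let F = diag(f), and let Φ be an n×k real matrix of full column rank. Then the matrix ΦᵀF(I − γP)Φ satisfies θᵀ(ΦᵀF(I − γP)Φ)θ > 0 for every nonzero θ ∈ ℝᵏ. (The matrix F(I − γP) has nonpositive off-diagonals, strictly positive column sums dᵀ, and strictly positive row sums (1−γ)f.) -/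
open Matrix BigOperators

/-- Positive definiteness of the ETD key matrix: with `d` a
strictly positive probability vector, `f = (I − γPᵀ)⁻¹ d`, `F = diag(f)`, and
`Φ` of full column rank, the ETD key matrix `ΦᵀF(I − γP)Φ` satisfies
`θᵀ(ΦᵀF(I − γP)Φ)θ > 0` for every nonzero `θ`. (The matrix `F(I − γP)` has
nonpositive off-diagonals, strictly positive column sums `dᵀ`, and strictly
positive row sums `(1−γ)f`.) -/
theorem stmt_15 (n k : ℕ) (hn : 1 ≤ n) (hk : 1 ≤ k)
    (P : Matrix (Fin n) (Fin n) ℝ)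
    (hP0 : ∀ i j, 0 ≤ P i j) (hP1 : ∀ i, ∑ j, P i j = 1)
    (γ : ℝ) (hγ0 : 0 ≤ γ) (hγ1 : γ < 1)
    (d : Fin n → ℝ) (hd0 : ∀ i, 0 < d i) (hd1 : ∑ i, d i = 1)
    (f : Fin n → ℝ) (hf : f = (1 - γ • Pᵀ)⁻¹ *ᵥ d)
    (Φ : Matrix (Fin n) (Fin k) ℝ)
    (hΦ : ∀ θ : Fin k → ℝ, Φ *ᵥ θ = 0 → θ = 0) :
    (∀ θ : Fin k → ℝ, θ ≠ 0 →
        0 < θ ⬝ᵥ ((Φᵀ * Matrix.diagonal f * (1 - γ • P) * Φ) *ᵥ θ)) ∧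
    (∀ i j, i ≠ j → (Matrix.diagonal f * (1 - γ • P)) i j ≤ 0) ∧
    (fun _ : Fin n => (1 : ℝ)) ᵥ* (Matrix.diagonal f * (1 - γ • P)) = d ∧
    (Matrix.diagonal f * (1 - γ • P)) *ᵥ (fun _ : Fin n => (1 : ℝ)) =
      (1 - γ) • f := by
  set M : Matrix (Fin n) (Fin n) ℝ := Matrix.diagonal f * (1 - γ • P) with hMdef
  have hPle1 : ∀ i j, P i j ≤ 1 := by
    intro i j
    calc P i j ≤ ∑ j', P i j' :=
          Finset.single_le_sum (fun j' _ => hP0 i j') (Finset.mem_univ j)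
    _ = 1 := hP1 i
  have hMentry : ∀ i j, M i j = f i * ((if i = j then 1 else 0) - γ * P i j) := by
    intro i j
    simp [hMdef, Matrix.diagonal_mul, Matrix.sub_apply, Matrix.one_apply,
      Matrix.smul_apply, smul_eq_mul]
  -- invertibility
  have hdet : (1 - γ • Pᵀ).det ≠ 0 := by
    apply det_ne_zero_of_sum_col_lt_diag
    intro j
    have hentry : ∀ i, (1 - γ • Pᵀ) i j = (if i = j then 1 else 0) - γ * P j i := by
      intro i
      simp [Matrix.sub_apply, Matrix.one_apply, Matrix.smul_apply, smul_eq_mul,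
        Matrix.transpose_apply]
    have h1 : ∑ i ∈ Finset.univ.erase j, ‖(1 - γ • Pᵀ) i j‖
        = γ * ∑ i ∈ Finset.univ.erase j, P j i := by
      rw [Finset.mul_sum]
      apply Finset.sum_congr rfl
      intro i hi
      have hij : i ≠ j := Finset.ne_of_mem_erase hi
      rw [hentry i, if_neg hij]
      rw [Real.norm_eq_abs, abs_of_nonpos (by nlinarith [hP0 j i])]
      ring
    have h2 : ∑ i ∈ Finset.univ.erase j, P j i = 1 - P j j := by
      have := Finset.sum_erase_add Finset.univ (P j) (Finset.mem_univ j)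
      rw [hP1 j] at this
      linarith
    have h3 : ‖(1 - γ • Pᵀ) j j‖ = 1 - γ * P j j := by
      rw [hentry j, if_pos rfl, Real.norm_eq_abs, abs_of_nonneg]
      nlinarith [hP0 j j, hPle1 j j]
    rw [h1, h2, h3]
    nlinarith [hP0 j j, hPle1 j j]
  have hAf : (1 - γ • Pᵀ) *ᵥ f = d := by
    rw [hf, mulVec_mulVec, Matrix.mul_nonsing_inv _ (isUnit_iff_ne_zero.mpr hdet),
      one_mulVec]
  have hfe : ∀ j, f j = d j + γ * ∑ i, P i j * f i := by
    intro j
    have h := congrFun hAf j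
    simp only [Matrix.mulVec, dotProduct, Matrix.sub_apply, Matrix.one_apply,
      Matrix.smul_apply, Matrix.transpose_apply, smul_eq_mul, sub_mul, ite_mul, one_mul,
      zero_mul, Finset.sum_sub_distrib, Finset.sum_ite_eq, Finset.mem_univ, if_pos] at h
    rw [Finset.mul_sum, ← h]
    have he : ∑ i, γ * (P i j * f i) = ∑ i, γ * P i j * f i :=
      Finset.sum_congr rfl (fun i _ => by ring)
    rw [he]
    ring
  -- positivity of f
  have hfpos : ∀ i, 0 < f i := by
    by_contra hc
    push_neg at hc
    obtain ⟨i0, hi0⟩ := hc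
    set S := Finset.univ.filter (fun j => f j ≤ 0) with hS
    have hi0S : i0 ∈ S := by simp [hS, hi0]
    have hSne : 0 < ∑ j ∈ S, d j :=
      Finset.sum_pos (fun j _ => hd0 j) ⟨i0, hi0S⟩
    have hSnonpos : ∑ j ∈ S, f j ≤ 0 :=
      Finset.sum_nonpos (fun j hj => (Finset.mem_filter.mp hj).2)
    have hsum : ∑ j ∈ S, f j = ∑ j ∈ S, d j + γ * ∑ i, f i * (∑ j ∈ S, P i j) := by
      calc ∑ j ∈ S, f j = ∑ j ∈ S, (d j + γ * ∑ i, P i j * f i) :=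
            Finset.sum_congr rfl (fun j _ => hfe j)
        _ = ∑ j ∈ S, d j + γ * ∑ j ∈ S, ∑ i, P i j * f i := by
            rw [Finset.sum_add_distrib, Finset.mul_sum]
        _ = ∑ j ∈ S, d j + γ * ∑ i, f i * (∑ j ∈ S, P i j) := by
            congr 1
            congr 1
            rw [Finset.sum_comm]
            apply Finset.sum_congr rfl
            intro i _
            rw [Finset.mul_sum]
            exact Finset.sum_congr rfl (fun j _ => by ring)
    have hkey : ∑ j ∈ S, f j ≤ ∑ i, f i * (∑ j ∈ S, P i j) := by
      have : ∑ j ∈ S, f j = ∑ i, (if i ∈ S then f i else 0) := by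
        rw [Finset.sum_ite_mem, Finset.univ_inter]
      rw [this]
      apply Finset.sum_le_sum
      intro i _
      by_cases hiS : i ∈ S
      · rw [if_pos hiS]
        have hfi : f i ≤ 0 := (Finset.mem_filter.mp hiS).2
        have hs1 : ∑ j ∈ S, P i j ≤ 1 := by
          rw [← hP1 i]
          exact Finset.sum_le_sum_of_subset_of_nonneg (Finset.subset_univ S)
            (fun j _ _ => hP0 i j)
        nlinarith
      · rw [if_neg hiS]
        have hfi : 0 < f i := by
          by_contra h
          exact hiS (by simp [hS]; linarith)
        have hs0 : 0 ≤ ∑ j ∈ S, P i j :=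
          Finset.sum_nonneg (fun j _ => hP0 i j)
        positivity
    nlinarith [mul_le_mul_of_nonneg_left hkey hγ0]
  -- column sums
  have hcol : ∀ j, ∑ i, M i j = d j := by
    intro j
    have : ∑ i, M i j = f j - γ * ∑ i, P i j * f i := by
      simp only [hMentry, mul_sub, mul_ite, mul_one, mul_zero, Finset.sum_sub_distrib,
        Finset.sum_ite_eq', Finset.mem_univ, if_pos, Finset.mul_sum]
      congr 1
      apply Finset.sum_congr rfl
      intro i _
      ring
    rw [this, hfe j]
    ring
  -- row sums
  have hrow : ∀ i, ∑ j, M i j = (1 - γ) * f i := by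
    intro i
    simp only [hMentry]
    rw [← Finset.mul_sum]
    simp only [sub_mul, Finset.sum_sub_distrib, Finset.sum_ite_eq', Finset.mem_univ,
      if_pos]
    rw [← Finset.mul_sum, hP1 i]
    simp only [Finset.sum_ite_eq, Finset.mem_univ, if_true, mul_one]
    ring
  -- off-diagonal nonpositivity
  have hoff : ∀ i j, i ≠ j → M i j ≤ 0 := by
    intro i j hij
    rw [hMentry, if_neg hij]
    have h := mul_nonneg (mul_nonneg (hfpos i).le hγ0) (hP0 i j)
    nlinarith
  refine ⟨?_, hoff, ?_, ?_⟩
  · intro θ hθ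
    set x := Φ *ᵥ θ with hx
    have hxne : x ≠ 0 := fun h => hθ (hΦ θ h)
    obtain ⟨i1, hi1⟩ : ∃ i, x i ≠ 0 := Function.ne_iff.mp hxne
    have hrewrite : θ ⬝ᵥ ((Φᵀ * Matrix.diagonal f * (1 - γ • P) * Φ) *ᵥ θ)
        = x ⬝ᵥ (M *ᵥ x) := by
      rw [show Φᵀ * Matrix.diagonal f * (1 - γ • P) * Φ = Φᵀ * M * Φ by
        rw [hMdef, Matrix.mul_assoc Φᵀ (Matrix.diagonal f) (1 - γ • P)]]
      rw [← mulVec_mulVec, ← mulVec_mulVec, dotProduct_mulVec, vecMul_transpose]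
    rw [hrewrite]
    have hexpand : x ⬝ᵥ (M *ᵥ x) = ∑ i, ∑ j, x i * (M i j * x j) := by
      simp [dotProduct, Matrix.mulVec, Finset.mul_sum]
    rw [hexpand]
    have hsum2 : ∑ i, ∑ j, M i j * ((x i ^ 2 + x j ^ 2) / 2)
        = ∑ i, (((1 - γ) * f i + d i) / 2 * x i ^ 2) := by
      have hsplit : ∀ i j : Fin n, M i j * ((x i ^ 2 + x j ^ 2) / 2)
          = M i j * x i ^ 2 / 2 + M i j * x j ^ 2 / 2 := fun i j => by ring
      simp_rw [hsplit, Finset.sum_add_distrib]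
      have h1 : ∑ i, ∑ j, M i j * x i ^ 2 / 2 = ∑ i, (1 - γ) * f i * x i ^ 2 / 2 := by
        apply Finset.sum_congr rfl
        intro i _
        rw [← Finset.sum_div, ← Finset.sum_mul, hrow i]
      have h2 : ∑ i, ∑ j, M i j * x j ^ 2 / 2 = ∑ j, d j * x j ^ 2 / 2 := by
        rw [Finset.sum_comm]
        apply Finset.sum_congr rfl
        intro j _
        rw [← Finset.sum_div, ← Finset.sum_mul, hcol j]
      rw [h1, h2, ← Finset.sum_add_distrib]
      apply Finset.sum_congr rfl
      intro i _
      ring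
    have hpos : 0 < ∑ i, (((1 - γ) * f i + d i) / 2 * x i ^ 2) := by
      apply Finset.sum_pos'
      · intro i _
        have h0 := hfpos i
        have h0' := hd0 i
        have h1γ : (0:ℝ) < 1 - γ := by linarith
        positivity
      · refine ⟨i1, Finset.mem_univ i1, ?_⟩
        have h1 : 0 < (1 - γ) * f i1 + d i1 := by
          have := hfpos i1
          have := hd0 i1
          nlinarith
        have h2 : 0 < x i1 ^ 2 := by positivity
        positivity
    have hineq : ∑ i, ∑ j, M i j * ((x i ^ 2 + x j ^ 2) / 2)
        ≤ ∑ i, ∑ j, x i * (M i j * x j) := by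
      apply Finset.sum_le_sum
      intro i _
      apply Finset.sum_le_sum
      intro j _
      rcases eq_or_ne i j with rfl | hij
      · exact le_of_eq (by ring)
      · have h1 : M i j ≤ 0 := hoff i j hij
        nlinarith [sq_nonneg (x i - x j)]
    calc (0:ℝ) < ∑ i, (((1 - γ) * f i + d i) / 2 * x i ^ 2) := hpos
      _ = ∑ i, ∑ j, M i j * ((x i ^ 2 + x j ^ 2) / 2) := hsum2.symm
      _ ≤ ∑ i, ∑ j, x i * (M i j * x j) := hineq
  · funext j
    simp only [Matrix.vecMul, dotProduct, one_mul]
    exact hcol j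
  · funext i
    simp only [Matrix.mulVec, dotProduct, mul_one, Pi.smul_apply, smul_eq_mul]
    exact hrow i
end

section
/- (Two-state CETD counterexample.) Let P_π = [[0,1],[0,1]], d_μ = (0.05, 0.95), Φ = (1, 0.6) (viewed as a 2×1 matrix), and γ = 0.9 = 9/10. Then f := (I − γP_πᵀ)⁻¹ d_μ = (0.05, 9.95), and with F = diag(f): ΦᵀF(I − γP_π)Φ = 0.3812 and d_μᵀΦ = 0.62. Consequently, the CETD key matrix Ḡ_CETD = [[0.3812, 0.62],[0.62, 1]] is not positive definite: for x = (1, −0.62), xᵀ Ḡ_CETD x = −0.0032 < 0. -/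
open Matrix BigOperators

/-- Two-state CETD counterexample: with
`P_π = [[0,1],[0,1]]`, `d_μ = (1/20, 19/20)`, `Φ = (1, 3/5)`, `γ = 9/10`,
one has `f = (I − γP_πᵀ)⁻¹ d_μ = (1/20, 199/20)`,
`ΦᵀF(I − γP_π)Φ = 0.3812`, `d_μᵀΦ = 0.62`, and the CETD key matrix
`Ḡ_CETD = [[0.3812, 0.62],[0.62, 1]]` is not positive definite: for
`x = (1, −0.62)`, `xᵀ Ḡ_CETD x = −0.0032 < 0`. -/
theorem stmt_16
    (P : Matrix (Fin 2) (Fin 2) ℝ) (hP : P = !![0, 1; 0, 1])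
    (d : Fin 2 → ℝ) (hd : d = ![1/20, 19/20])
    (Φ : Matrix (Fin 2) (Fin 1) ℝ) (hΦ : Φ = !![1; 3/5])
    (γ : ℝ) (hγ : γ = 9/10)
    (f : Fin 2 → ℝ) (hf : f = (1 - γ • Pᵀ)⁻¹ *ᵥ d)
    (G : Matrix (Fin 2) (Fin 2) ℝ)
    (hG : G = !![3812/10000, 62/100; 62/100, 1]) :
    f = ![1/20, 199/20] ∧
    Φᵀ * Matrix.diagonal f * (1 - γ • P) * Φ = !![3812/10000] ∧
    d ᵥ* Φ = ![62/100] ∧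
    (![1, -(62/100)] : Fin 2 → ℝ) ⬝ᵥ (G *ᵥ ![1, -(62/100)]) = -(32/10000) ∧
    (-(32/10000) : ℝ) < 0 ∧
    ¬ (∀ x : Fin 2 → ℝ, x ≠ 0 → 0 < x ⬝ᵥ (G *ᵥ x)) := by
  subst hP hd hΦ hγ hG
  have hM : (1 - (9/10 : ℝ) • (!![0, 1; 0, 1] : Matrix (Fin 2) (Fin 2) ℝ)ᵀ) = !![1, 0; -(9/10), 1/10] := by
    ext i j; fin_cases i <;> fin_cases j <;>
      simp [Matrix.one_apply, Matrix.transpose_apply, Matrix.vecHead, Matrix.vecTail] <;> norm_num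
  have hMinv : (!![1, 0; -(9/10), 1/10] : Matrix (Fin 2) (Fin 2) ℝ)⁻¹ = !![1, 0; 9, 10] := by
    rw [Matrix.inv_def, Matrix.adjugate_fin_two, Matrix.det_fin_two]
    norm_num
  have hf' : f = ![1/20, 199/20] := by
    rw [hf, hM, hMinv]
    ext i; fin_cases i <;> simp [Matrix.mulVec, dotProduct, Fin.sum_univ_two] <;> norm_num
  refine ⟨hf', ?_, ?_, ?_, by norm_num, ?_⟩
  · rw [hf']
    ext i j; fin_cases i; fin_cases j
    simp [Matrix.mul_apply, Fin.sum_univ_two, Matrix.one_apply, Matrix.diagonal, Matrix.transpose_apply, Matrix.vecHead, Matrix.vecTail]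
    norm_num
  · ext i; fin_cases i
    simp [Matrix.vecMul, dotProduct, Fin.sum_univ_two]; norm_num
  · simp [Matrix.mulVec, dotProduct, Fin.sum_univ_two]; norm_num
  · intro h
    have := h ![1, -(62/100)] (by
      intro hx
      have := congrFun hx 0
      simp at this)
    simp [Matrix.mulVec, dotProduct, Fin.sum_univ_two] at this
    norm_num at this
end
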